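/- arXiv:1808.01336 — 5 statements merged into one kernel-verified Lean document; each statement's English description precedes it below -/
import Mathlib

section
/- If j : ℝ → ℝ satisfies the Jacobi equation j'' = -K·j where K(t) ≤ 0 for all t ≥ 0, with initial conditions j(0) = 0 and j'(0) = 1, then j'(t) ≥ 1 for all t ≥ 0 and j(t) > 0 for all t > 0. -/
open Set

lemma jacobi_aux (K j j' j'' : ℝ → ℝ)
    (hKneg : ∀ t ≥ (0 : ℝ), K t ≤ 0)
    (hj' : ∀ t, HasDerivAt j (j' t) t)
    (hj'' : ∀ t, HasDerivAt j' (j'' t) t)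
    (heq : ∀ t, j'' t + K t * j t = 0)
    (h1 : j' 0 = 1) (b : ℝ) (hb : 0 ≤ b)
    (hnn : ∀ s ∈ Set.Icc (0:ℝ) b, 0 ≤ j s) :
    (∀ s ∈ Set.Icc (0:ℝ) b, 1 ≤ j' s) ∧ StrictMonoOn j (Set.Icc (0:ℝ) b) := by
  have hj''nn : ∀ s ∈ Set.Icc (0:ℝ) b, 0 ≤ j'' s := by
    intro s hs
    have h := heq s
    have hK := hKneg s hs.1
    nlinarith [hnn s hs]
  have hmono : MonotoneOn j' (Set.Icc (0:ℝ) b) := by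
    apply monotoneOn_of_deriv_nonneg (convex_Icc 0 b)
    · exact fun x _ => (hj'' x).continuousAt.continuousWithinAt
    · exact fun x _ => ((hj'' x).differentiableAt).differentiableWithinAt
    · intro x hx
      rw [(hj'' x).deriv]
      rw [interior_Icc] at hx
      exact hj''nn x ⟨le_of_lt hx.1, le_of_lt hx.2⟩
  have hge1 : ∀ s ∈ Set.Icc (0:ℝ) b, 1 ≤ j' s := by
    intro s hs
    have := hmono ⟨le_refl 0, hb⟩ hs hs.1
    rwa [h1] at this
  refine ⟨hge1, ?_⟩
  apply strictMonoOn_of_deriv_pos (convex_Icc 0 b)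
  · exact fun x _ => (hj' x).continuousAt.continuousWithinAt
  · intro x hx
    rw [(hj' x).deriv, interior_Icc] at *
    have := hge1 x ⟨le_of_lt hx.1, le_of_lt hx.2⟩
    linarith

/-- If `j : ℝ → ℝ` satisfies the Jacobi equation `j'' = -K·j` where `K t ≤ 0` for `t ≥ 0`,
with `j 0 = 0` and `j' 0 = 1`, then `j' t ≥ 1` for all `t ≥ 0` and `j t > 0` for all `t > 0`. -/
theorem vertical_jacobi_field (K j j' j'' : ℝ → ℝ)
    (hK : Continuous K) (hKneg : ∀ t ≥ (0 : ℝ), K t ≤ 0)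
    (hj' : ∀ t, HasDerivAt j (j' t) t)
    (hj'' : ∀ t, HasDerivAt j' (j'' t) t)
    (heq : ∀ t, j'' t + K t * j t = 0)
    (h0 : j 0 = 0) (h1 : j' 0 = 1) :
    (∀ t ≥ (0 : ℝ), 1 ≤ j' t) ∧ (∀ t > (0 : ℝ), 0 < j t) := by
  -- j is positive just to the right of 0
  have hpos_near : ∃ ε > (0:ℝ), ∀ t, 0 < t → t < ε → 0 < j t := by
    have hslope : Filter.Tendsto (slope j 0) (nhdsWithin 0 {(0:ℝ)}ᶜ) (nhds 1) := by
      have := hasDerivAt_iff_tendsto_slope.mp (hj' 0)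
      rwa [h1] at this
    have hev : ∀ᶠ t in nhdsWithin 0 {(0:ℝ)}ᶜ, 0 < slope j 0 t :=
      hslope.eventually (eventually_gt_nhds one_pos)
    rw [eventually_nhdsWithin_iff, Metric.eventually_nhds_iff] at hev
    obtain ⟨ε, hε, hball⟩ := hev
    refine ⟨ε, hε, fun t ht htε => ?_⟩
    have h1 : dist t 0 < ε := by
      rw [Real.dist_eq, sub_zero, abs_of_pos ht]; exact htε
    have h2 := hball h1 (by simp [ne_of_gt ht])
    rw [slope_def_field, h0, sub_zero, sub_zero] at h2
    have := mul_pos h2 ht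
    rwa [div_mul_cancel₀ _ (ne_of_gt ht)] at this
  obtain ⟨ε, hε, hεpos⟩ := hpos_near
  -- j is nonnegative on [0, ∞)
  have hnonneg : ∀ t ≥ (0:ℝ), 0 ≤ j t := by
    by_contra hcon
    push_neg at hcon
    obtain ⟨t0, ht0, ht0neg⟩ := hcon
    set B : Set ℝ := {t | 0 ≤ t ∧ j t < 0} with hB
    have hne : B.Nonempty := ⟨t0, ht0, ht0neg⟩
    have hbdd : BddBelow B := ⟨0, fun x hx => hx.1⟩
    set b := sInf B with hbdef
    have hεle : ∀ x ∈ B, ε ≤ x := by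
      intro x hx
      by_contra hlt
      push_neg at hlt
      rcases eq_or_lt_of_le hx.1 with heq0 | hpos
      · have h2 := hx.2
        rw [← heq0, h0] at h2
        exact absurd h2 (lt_irrefl 0)
      · exact absurd (hεpos x hpos hlt) (not_lt.mpr (le_of_lt hx.2))
    have hbε : ε ≤ b := le_csInf hne hεle
    have hbpos : 0 < b := lt_of_lt_of_le hε hbε
    have hlt_nn : ∀ s, 0 ≤ s → s < b → 0 ≤ j s := by
      intro s hs hsb
      by_contra hneg
      push_neg at hneg
      exact absurd (csInf_le hbdd ⟨hs, hneg⟩) (not_le.mpr hsb)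
    have hjb : 0 ≤ j b := by
      by_contra hneg
      push_neg at hneg
      have hc : ContinuousAt j b := (hj' b).continuousAt
      obtain ⟨δ, hδ, hδball⟩ := Metric.continuousAt_iff.mp hc (-(j b)) (by linarith)
      set s := max (b/2) (b - δ/2) with hs
      have hs0 : 0 < s := lt_of_lt_of_le (by linarith) (le_max_left _ _)
      have hsb : s < b := max_lt (by linarith) (by linarith)
      have hsd : dist s b < δ := by
        rw [Real.dist_eq, abs_of_nonpos (by linarith)]
        have : b - δ/2 ≤ s := le_max_right _ _
        linarith
      have := hδball hsd
      rw [Real.dist_eq] at this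
      have hjs : j s < 0 := by
        cases abs_lt.mp this with
        | intro hl hr => linarith
      exact absurd (csInf_le hbdd ⟨le_of_lt hs0, hjs⟩) (not_le.mpr hsb)
    have hnnIcc : ∀ s ∈ Set.Icc (0:ℝ) b, 0 ≤ j s := by
      intro s hs
      rcases lt_or_eq_of_le hs.2 with hlt | heqb
      · exact hlt_nn s hs.1 hlt
      · rw [heqb]; exact hjb
    obtain ⟨_, hsm⟩ := jacobi_aux K j j' j'' hKneg hj' hj'' heq h1 b (le_of_lt hbpos) hnnIcc
    have hjbpos : 0 < j b := by
      have := hsm (left_mem_Icc.mpr (le_of_lt hbpos)) (right_mem_Icc.mpr (le_of_lt hbpos)) hbpos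
      rwa [h0] at this
    -- contradiction: all of B is ≥ b + δ for some δ
    have hc : ContinuousAt j b := (hj' b).continuousAt
    obtain ⟨δ, hδ, hδball⟩ := Metric.continuousAt_iff.mp hc (j b) hjbpos
    have hall : ∀ x ∈ B, b + δ ≤ x := by
      intro x hx
      by_contra hlt
      push_neg at hlt
      have hxb : b ≤ x := csInf_le hbdd hx
      have : dist x b < δ := by
        rw [Real.dist_eq, abs_of_nonneg (by linarith)]; linarith
      have := hδball this
      rw [Real.dist_eq] at this
      cases abs_lt.mp this with
      | intro hl hr => linarith [hx.2]
    have := le_csInf hne hall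
    linarith
  constructor
  · intro t ht
    obtain ⟨hge1, _⟩ := jacobi_aux K j j' j'' hKneg hj' hj'' heq h1 t ht
      (fun s hs => hnonneg s hs.1)
    exact hge1 t (right_mem_Icc.mpr ht)
  · intro t ht
    obtain ⟨_, hsm⟩ := jacobi_aux K j j' j'' hKneg hj' hj'' heq h1 t (le_of_lt ht)
      (fun s hs => hnonneg s hs.1)
    have := hsm (left_mem_Icc.mpr (le_of_lt ht)) (right_mem_Icc.mpr (le_of_lt ht)) ht
    rwa [h0] at this
end

section
/- If j satisfies j'' = -K·j with K(t) ≤ 0 for all t ≥ 0, initial conditions j(0) = 1, j'(0) = 0, and there exists an interval (a,b) ⊆ (0,∞) on which K(t) < 0, then j'(t) > 0 for all t ≥ b. -/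
/-- If `j'' = -K·j` with `K ≤ 0` on `[0,∞)`, `j 0 = 1`, `j' 0 = 0`, and `K < 0` on some
interval `(a,b)` with `0 < a < b`, then `j' t > 0` for all `t ≥ b`. -/
theorem horizontal_jacobi_field_strict (K j j' j'' : ℝ → ℝ) (a b : ℝ)
    (hK : Continuous K) (hKneg : ∀ t ≥ (0 : ℝ), K t ≤ 0)
    (hab : 0 < a) (hab' : a < b)
    (hKltzero : ∀ t ∈ Set.Ioo a b, K t < 0)
    (hj' : ∀ t, HasDerivAt j (j' t) t)
    (hj'' : ∀ t, HasDerivAt j' (j'' t) t)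
    (heq : ∀ t, j'' t + K t * j t = 0)
    (h0 : j 0 = 1) (h1 : j' 0 = 0) :
    ∀ t ≥ b, 0 < j' t := by
  have hjd : ∀ t, deriv j t = j' t := fun t => (hj' t).deriv
  have hj'd : ∀ t, deriv j' t = j'' t := fun t => (hj'' t).deriv
  have hdiffj : Differentiable ℝ j := fun t => (hj' t).differentiableAt
  have hdiffj' : Differentiable ℝ j' := fun t => (hj'' t).differentiableAt
  have hcj : Continuous j := hdiffj.continuous
  have hcj' : Continuous j' := hdiffj'.continuous
  -- j'' t ≥ 0 whenever t ≥ 0 and j t ≥ 0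
  have hj''nonneg : ∀ t, 0 ≤ t → 0 ≤ j t → 0 ≤ j'' t := by
    intro t ht hjt
    have := heq t
    nlinarith [hKneg t ht]
  -- a generic monotonicity lemma for j' on [x,y] when j ≥ 0 there
  have mono_j' : ∀ x y : ℝ, 0 ≤ x → (∀ t ∈ Set.Icc x y, 0 ≤ j t) →
      MonotoneOn j' (Set.Icc x y) := by
    intro x y hx hpos
    apply monotoneOn_of_deriv_nonneg (convex_Icc x y) hcj'.continuousOn
      (hdiffj'.differentiableOn)
    intro t ht
    rw [interior_Icc] at ht
    rw [hj'd]
    exact hj''nonneg t (le_of_lt (lt_of_le_of_lt hx ht.1))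
      (hpos t ⟨le_of_lt ht.1, le_of_lt ht.2⟩)
  -- main claim: j ≥ 1 on [0, ∞)
  have hjge1 : ∀ t, 0 ≤ t → 1 ≤ j t := by
    by_contra hcon
    push_neg at hcon
    set A : Set ℝ := {t | 0 ≤ t ∧ j t < 1} with hA
    have hAne : A.Nonempty := by
      obtain ⟨t, ht, hjt⟩ := hcon
      exact ⟨t, ht, hjt⟩
    have hAbdd : BddBelow A := ⟨0, fun t ht => ht.1⟩
    set c := sInf A with hc
    have hc0 : 0 ≤ c := le_csInf hAne fun t ht => ht.1
    have hclb : ∀ t ∈ A, c ≤ t := fun t ht => csInf_le hAbdd ht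
    have hbelow : ∀ t, 0 ≤ t → t < c → 1 ≤ j t := by
      intro t ht htc
      by_contra h
      push_neg at h
      exact absurd (hclb t ⟨ht, h⟩) (not_le.mpr htc)
    -- j c ≤ 1
    have hjc_le : j c ≤ 1 := by
      by_contra h
      push_neg at h
      have hopen : IsOpen (j ⁻¹' Set.Ioi 1) := (isOpen_Ioi).preimage hcj
      obtain ⟨δ, hδ, hball⟩ := Metric.isOpen_iff.mp hopen c h
      obtain ⟨t, htA, htlt⟩ := exists_lt_of_csInf_lt hAne
        (show sInf A < c + δ by simpa [← hc] using hδ)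
      have : j t > 1 := hball (by
        rw [Metric.mem_ball, Real.dist_eq, abs_lt]
        constructor <;> [linarith [hclb t htA]; linarith])
      exact absurd htA.2 (not_lt.mpr this.le)
    -- j c ≥ 1
    have hjc_ge : 1 ≤ j c := by
      rcases eq_or_lt_of_le hc0 with h | h
      · rw [← h]; rw [h0]
      · have hne : (nhdsWithin c (Set.Iio c)).NeBot := by
          exact nhdsLT_neBot c
        have htend : Filter.Tendsto j (nhdsWithin c (Set.Iio c)) (nhds (j c)) :=
          (hcj.continuousWithinAt (s := Set.Iio c) (x := c)).tendsto
        refine ge_of_tendsto htend ?_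
        filter_upwards [Ioo_mem_nhdsLT_of_mem (Set.mem_Ioc.mpr ⟨h, le_refl c⟩)] with t ht
        exact hbelow t ht.1.le ht.2
    have hjc : j c = 1 := le_antisymm hjc_le hjc_ge
    -- j ≥ 1 on [0, c], hence j' ≥ 0 on [0, c], in particular j' c ≥ 0
    have hj_ge_on : ∀ t ∈ Set.Icc 0 c, 1 ≤ j t := by
      intro t ht
      rcases eq_or_lt_of_le ht.2 with h | h
      · rw [h, hjc]
      · exact hbelow t ht.1 h
    have hj'c : 0 ≤ j' c := by
      have hm := mono_j' 0 c le_rfl (fun t ht => le_trans zero_le_one (hj_ge_on t ht))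
      have := hm (Set.left_mem_Icc.mpr hc0) (Set.right_mem_Icc.mpr hc0) hc0
      rw [h1] at this; exact this
    -- find δ with j > 0 on ball c δ
    have hopen : IsOpen (j ⁻¹' Set.Ioi 0) := (isOpen_Ioi).preimage hcj
    obtain ⟨δ, hδ, hball⟩ := Metric.isOpen_iff.mp hopen c (by rw [Set.mem_preimage, hjc]; exact Set.mem_Ioi.mpr zero_lt_one)
    -- j ≥ 0 on [c, c + δ/2], so j' monotone there, j' ≥ 0, j monotone
    have hjpos : ∀ t ∈ Set.Icc c (c + δ/2), 0 ≤ j t := by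
      intro t ht
      have : j t > 0 := hball (by
        rw [Metric.mem_ball, Real.dist_eq, abs_lt]
        constructor <;> [linarith [ht.1]; linarith [ht.2]])
      exact this.le
    have hm' := mono_j' c (c + δ/2) hc0 hjpos
    have hj'nonneg : ∀ t ∈ Set.Icc c (c + δ/2), 0 ≤ j' t := by
      intro t ht
      have := hm' (Set.left_mem_Icc.mpr (by linarith)) ht ht.1
      linarith
    have hmonoj : MonotoneOn j (Set.Icc c (c + δ/2)) := by
      apply monotoneOn_of_deriv_nonneg (convex_Icc _ _) hcj.continuousOn hdiffj.differentiableOn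
      intro t ht
      rw [interior_Icc] at ht
      rw [hjd]
      exact hj'nonneg t ⟨ht.1.le, ht.2.le⟩
    -- contradiction: element of A in [c, c+δ/2]
    obtain ⟨t, htA, htlt⟩ := exists_lt_of_csInf_lt hAne
      (show sInf A < c + δ/2 by rw [← hc]; linarith)
    have htc : c ≤ t := hclb t htA
    have : j c ≤ j t := hmonoj (Set.left_mem_Icc.mpr (by linarith))
      ⟨htc, htlt.le⟩ htc
    rw [hjc] at this
    exact absurd htA.2 (not_lt.mpr this)
  -- now j' monotone on [0, ∞)
  have hmono : MonotoneOn j' (Set.Ici 0) := by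
    apply monotoneOn_of_deriv_nonneg (convex_Ici 0) hcj'.continuousOn hdiffj'.differentiableOn
    intro t ht
    rw [interior_Ici] at ht
    rw [hj'd]
    exact hj''nonneg t ht.le (le_trans zero_le_one (hjge1 t ht.le))
  have hj'a : 0 ≤ j' a := by
    have := hmono (Set.mem_Ici.mpr le_rfl) (Set.mem_Ici.mpr hab.le) hab.le
    rw [h1] at this; exact this
  -- strict monotonicity on [a, b]
  have hstrict : StrictMonoOn j' (Set.Icc a b) := by
    apply strictMonoOn_of_deriv_pos (convex_Icc a b) hcj'.continuousOn
    intro t ht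
    rw [interior_Icc] at ht
    rw [hj'd]
    have hKt := hKltzero t ht
    have hjt : 1 ≤ j t := hjge1 t (le_of_lt (lt_trans hab ht.1))
    have := heq t
    nlinarith
  have hj'b : 0 < j' b := by
    have := hstrict (Set.left_mem_Icc.mpr hab'.le) (Set.right_mem_Icc.mpr hab'.le) hab'
    linarith
  intro t ht
  have hb0 : (0:ℝ) ≤ b := le_of_lt (lt_trans hab hab')
  have := hmono (Set.mem_Ici.mpr hb0) (Set.mem_Ici.mpr (le_trans hb0 ht)) ht
  linarith
end

section
/- Let X, Y be linearly independent vectors in a 2-dimensional real inner product space and let A be linear with |det A| = 1. If the angle θₙ between AⁿX and AⁿY tends to 0 as n → ∞, then max(‖AⁿX‖, ‖AⁿY‖) → ∞. -/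
open InnerProductGeometry Filter
open scoped RealInnerProductSpace

/-! The area form `ω` of an orientation of the plane satisfies
`sin (angle x y) * ‖x‖ * ‖y‖ = |ω x y|` and `ω (A x) (A y) = det A * ω x y`. Hence, when
`|det A| = 1`, the quantity `sin θₙ * ‖AⁿX‖ * ‖AⁿY‖` is the constant `|ω X Y|`, which is nonzero
because `X, Y` are independent. As `θₙ → 0`, the product `‖AⁿX‖ * ‖AⁿY‖ = |ω X Y| / sin θₙ`
diverges, and so does the larger factor. -/

theorem AlternatingMap.apply_comp_eq_det_mul {R M ι : Type*} [CommRing R] [AddCommGroup M]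
    [Module R M] [Fintype ι] [DecidableEq ι] (e : Module.Basis ι R M) (f : M [⋀^ι]→ₗ[R] R)
    (A : M →ₗ[R] M) (v : ι → M) : f (A ∘ v) = LinearMap.det A * f v := by
  rw [f.eq_smul_basis_det e]
  simp only [AlternatingMap.smul_apply, smul_eq_mul, Module.Basis.det_comp]
  ring

namespace Orientation

variable {E : Type*} [NormedAddCommGroup E] [InnerProductSpace ℝ E]

theorem volumeForm_ne_zero_of_linearIndependent [FiniteDimensional ℝ E] {n : ℕ}
    [Fact (Module.finrank ℝ E = n)] (o : Orientation ℝ E (Fin n)) {v : Fin n → E}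
    (hv : LinearIndependent ℝ v) : o.volumeForm v ≠ 0 := by
  have hn : Module.finrank ℝ E = n := Fact.out
  have hcard : Fintype.card (Fin n) = Module.finrank ℝ E := by rw [Fintype.card_fin, hn]
  let b : OrthonormalBasis (Fin n) ℝ E := (stdOrthonormalBasis ℝ E).reindex (finCongr hn)
  rw [← abs_ne_zero, o.volumeForm_robust' b, abs_ne_zero,
    ← coe_basisOfLinearIndependentOfCardEqFinrank' v hv hcard]
  exact (b.toBasis.isUnit_det _).ne_zero

variable [Fact (Module.finrank ℝ E = 2)] (o : Orientation ℝ E (Fin 2))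

attribute [local instance] FiniteDimensional.of_fact_finrank_eq_two

theorem areaForm_comp_linearMap (A : E →ₗ[ℝ] E) (x y : E) :
    o.areaForm (A x) (A y) = LinearMap.det A * o.areaForm x y := by
  have hAxy : ![A x, A y] = A ∘ ![x, y] := by
    ext i; fin_cases i <;> rfl
  simp only [areaForm_to_volumeForm, hAxy]
  exact o.volumeForm.apply_comp_eq_det_mul (Module.finBasisOfFinrankEq ℝ E Fact.out) A _

theorem areaForm_ne_zero_of_linearIndependent {x y : E}
    (h : LinearIndependent ℝ ![x, y]) : o.areaForm x y ≠ 0 := by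
  simpa only [areaForm_to_volumeForm] using o.volumeForm_ne_zero_of_linearIndependent h

theorem sin_angle_mul_norm_mul_norm_eq_abs_areaForm (x y : E) :
    Real.sin (angle x y) * (‖x‖ * ‖y‖) = |o.areaForm x y| := by
  rw [sin_angle_mul_norm_mul_norm, ← Real.sqrt_sq_eq_abs, real_inner_self_eq_norm_sq,
    real_inner_self_eq_norm_sq, ← o.inner_sq_add_areaForm_sq]
  ring_nf

end Orientation

theorem tendsto_atTop_of_mul_eq_of_tendsto_zero {α : Type*} {l : Filter α} {f g : α → ℝ}
    {c : ℝ} (hc : 0 < c) (hf : ∀ a, 0 ≤ f a) (hfg : ∀ a, f a * g a = c)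
    (hf0 : Tendsto f l (nhds 0)) :
    Tendsto g l atTop := by
  have hpos : ∀ a, 0 < f a := fun a =>
    (hf a).lt_of_ne fun h => hc.ne' (by rw [← hfg a, ← h, zero_mul])
  have hg : g = fun a => c * (f a)⁻¹ := by
    ext a; rw [← hfg a, mul_comm (f a), mul_assoc, mul_inv_cancel₀ (hpos a).ne', mul_one]
  rw [hg]
  exact (tendsto_nhdsWithin_of_tendsto_nhds_of_eventually_within _ hf0
    (Eventually.of_forall hpos)).inv_tendsto_nhdsGT_zero.const_mul_atTop hc

theorem tendsto_max_atTop_of_tendsto_mul {α : Type*} {l : Filter α} {f g : α → ℝ}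
    (hf : ∀ a, 0 ≤ f a) (hg : ∀ a, 0 ≤ g a) (h : Tendsto (fun a => f a * g a) l atTop) :
    Tendsto (fun a => max (f a) (g a)) l atTop := by
  refine tendsto_atTop_mono (fun a => ?_) (Real.tendsto_sqrt_atTop.comp h)
  have hmax : 0 ≤ max (f a) (g a) := (hf a).trans (le_max_left _ _)
  calc √(f a * g a) ≤ √(max (f a) (g a) * max (f a) (g a)) :=
        Real.sqrt_le_sqrt (mul_le_mul (le_max_left _ _) (le_max_right _ _) (hg a) hmax)
    _ = max (f a) (g a) := Real.sqrt_mul_self hmax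

theorem shrinking_angle_forces_norm_growth_general {V : Type*} [NormedAddCommGroup V]
    [InnerProductSpace ℝ V] (hdim : Module.finrank ℝ V = 2)
    (X Y : V) (hind : LinearIndependent ℝ ![X, Y])
    (A : V →ₗ[ℝ] V) (hdet : |LinearMap.det A| = 1)
    (hangle : Tendsto (fun n : ℕ => angle ((A ^ n) X) ((A ^ n) Y)) atTop (nhds 0)) :
    Tendsto (fun n : ℕ => max ‖(A ^ n) X‖ ‖(A ^ n) Y‖) atTop atTop := by
  have : Fact (Module.finrank ℝ V = 2) := ⟨hdim⟩
  have : FiniteDimensional ℝ V := .of_fact_finrank_eq_two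
  let o : Orientation ℝ V (Fin 2) := (Module.finBasisOfFinrankEq ℝ V hdim).orientation
  have harea : ∀ n : ℕ, Real.sin (angle ((A ^ n) X) ((A ^ n) Y)) *
      (‖(A ^ n) X‖ * ‖(A ^ n) Y‖) = |o.areaForm X Y| := fun n => by
    rw [o.sin_angle_mul_norm_mul_norm_eq_abs_areaForm, o.areaForm_comp_linearMap, abs_mul,
      map_pow, abs_pow, hdet, one_pow, one_mul]
  have hsin := (Real.continuous_sin.tendsto' 0 0 Real.sin_zero).comp hangle
  refine tendsto_max_atTop_of_tendsto_mul (fun _ => norm_nonneg _) (fun _ => norm_nonneg _) ?_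
  exact tendsto_atTop_of_mul_eq_of_tendsto_zero
    (abs_pos.2 (o.areaForm_ne_zero_of_linearIndependent hind))
    (fun _ => Real.sin_nonneg_of_nonneg_of_le_pi (angle_nonneg _ _) (angle_le_pi _ _)) harea hsin

/-- For linearly independent `X, Y` in a 2-dimensional real inner product space and `A` linear
with `|det A| = 1`: if the angle between `AⁿX` and `AⁿY` tends to `0`, then
`max(‖AⁿX‖, ‖AⁿY‖) → ∞`. -/
theorem shrinking_angle_forces_norm_growth {V : Type*} [NormedAddCommGroup V]
    [InnerProductSpace ℝ V] [FiniteDimensional ℝ V] (hdim : Module.finrank ℝ V = 2)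
    (X Y : V) (hind : LinearIndependent ℝ ![X, Y])
    (A : V →ₗ[ℝ] V) (hdet : |LinearMap.det A| = 1)
    (hangle : Tendsto (fun n : ℕ => angle ((A ^ n) X) ((A ^ n) Y)) atTop (nhds 0)) :
    Tendsto (fun n : ℕ => max ‖(A ^ n) X‖ ‖(A ^ n) Y‖) atTop atTop :=
  shrinking_angle_forces_norm_growth_general hdim X Y hind A hdet hangle
end

section
/- Let V be a 2-dimensional real inner product space with a nested sequence of closed cones Cₙ = {αXₙ + βYₙ : αβ ≥ 0} (Cₙ₊₁ ⊆ Cₙ) determined by unit vectors Xₙ, Yₙ, such that the angle θₙ between Xₙ and Yₙ tends to 0. Then the intersection ⋂ₙ Cₙ is a one-dimensional subspace (a line through the origin) of V. -/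
/-!
Vectors `v, w` of the cone spanned by unit vectors `X, Y` make, up to sign, an angle at most
`angle X Y`, i.e. `|⟪v, w⟫| ≥ cos (angle X Y) * ‖v‖ * ‖w‖`. The sets `Cₙ ∩ S` (with `S` the
unit sphere) are compact (`Cₙ` is closed, being a pair of opposite quadrants in the basis
`Xₙ, Yₙ`), nested and contain `Xₙ`, so by Cantor's intersection theorem some unit vector `Z`
lies in every cone. For `v` in every cone the inequality with `Z`, in the limit
`angle Xₙ Yₙ → 0`, is equality in Cauchy–Schwarz, so `v ∈ ℝ ∙ Z`; conversely cones are
closed under scaling.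
-/

open InnerProductGeometry Filter

/-- The cone determined by `X` and `Y`: `{αX + βY : αβ ≥ 0}`. -/
def cone {V : Type*} [AddCommGroup V] [Module ℝ V] (X Y : V) : Set V :=
  {v | ∃ α β : ℝ, 0 ≤ α * β ∧ v = α • X + β • Y}

open Real
open scoped RealInnerProductSpace

section Algebraic

variable {V : Type*} [AddCommGroup V] [Module ℝ V]

theorem left_mem_cone (X Y : V) : X ∈ cone X Y :=
  ⟨1, 0, by norm_num, by simp⟩

theorem smul_mem_cone {X Y v : V} (r : ℝ) (hv : v ∈ cone X Y) : r • v ∈ cone X Y := by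
  obtain ⟨α, β, hαβ, rfl⟩ := hv
  refine ⟨r * α, r * β, ?_, by simp only [smul_add, smul_smul]⟩
  nlinarith [mul_nonneg (sq_nonneg r) hαβ]

theorem span_singleton_subset_cone {X Y v : V} (hv : v ∈ cone X Y) :
    ((ℝ ∙ v : Submodule ℝ V) : Set V) ⊆ cone X Y := by
  intro w hw
  obtain ⟨r, rfl⟩ := Submodule.mem_span_singleton.mp hw
  exact smul_mem_cone r hv

theorem cone_basis_eq_setOf_repr_mul_nonneg (b : Module.Basis (Fin 2) ℝ V) :
    cone (b 0) (b 1) = {v | 0 ≤ b.repr v 0 * b.repr v 1} := by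
  ext v
  constructor
  · rintro ⟨α, β, hαβ, rfl⟩
    simpa using hαβ
  · intro hv
    refine ⟨b.repr v 0, b.repr v 1, hv, ?_⟩
    exact (b.sum_repr v).symm.trans (Fin.sum_univ_two _)

end Algebraic

theorem isClosed_cone_basis {V : Type*} [NormedAddCommGroup V] [NormedSpace ℝ V]
    [FiniteDimensional ℝ V] (b : Module.Basis (Fin 2) ℝ V) : IsClosed (cone (b 0) (b 1)) := by
  rw [cone_basis_eq_setOf_repr_mul_nonneg]
  exact isClosed_le continuous_const
    ((b.coord 0).continuous_of_finiteDimensional.mul (b.coord 1).continuous_of_finiteDimensional)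

theorem isClosed_cone_of_linearIndependent {V : Type*} [NormedAddCommGroup V] [NormedSpace ℝ V]
    [FiniteDimensional ℝ V] (hdim : Module.finrank ℝ V = 2) {X Y : V}
    (h : LinearIndependent ℝ ![X, Y]) : IsClosed (cone X Y) := by
  have hb := isClosed_cone_basis (basisOfLinearIndependentOfCardEqFinrank h (by simp [hdim]))
  simpa using hb

/-- `c² ‖v‖² ‖w‖² ≤ ⟪v, w⟫²` for `v = αX + βY`, `w = γX + δY` with unit `X, Y` and `⟪X, Y⟫ = c`,
written in coordinates. -/
theorem sq_mul_le_sq_of_mul_nonneg {c α β γ δ : ℝ} (hc₀ : 0 ≤ c) (hc₁ : c ≤ 1)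
    (hαβ : 0 ≤ α * β) (hγδ : 0 ≤ γ * δ) :
    c ^ 2 * ((α ^ 2 + β ^ 2 + 2 * α * β * c) * (γ ^ 2 + δ ^ 2 + 2 * γ * δ * c))
      ≤ (α * γ + β * δ + (α * δ + β * γ) * c) ^ 2 := by
  have key : (α * γ + β * δ + (α * δ + β * γ) * c) ^ 2
      - c ^ 2 * ((α ^ 2 + β ^ 2 + 2 * α * β * c) * (γ ^ 2 + δ ^ 2 + 2 * γ * δ * c))
      = (1 - c ^ 2) * ((α * γ + β * δ) ^ 2
        + 2 * c * ((α ^ 2 + β ^ 2) * (γ * δ) + (α * β) * (γ ^ 2 + δ ^ 2))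
        + 4 * c ^ 2 * ((α * β) * (γ * δ))) := by ring
  rw [← sub_nonneg, key]
  exact mul_nonneg (by nlinarith) (by positivity)

section Inner

variable {V : Type*} [NormedAddCommGroup V] [InnerProductSpace ℝ V]

theorem linearIndependent_pair_of_angle_pos_of_lt_pi {X Y : V} (hX : X ≠ 0) (hY : Y ≠ 0)
    (h0 : 0 < angle X Y) (hπ : angle X Y < π) : LinearIndependent ℝ ![X, Y] := by
  rw [LinearIndependent.pair_iff' hX]
  rintro a rfl
  rcases lt_trichotomy a 0 with ha | rfl | ha
  · exact hπ.ne (angle_eq_pi_iff.mpr ⟨hX, a, ha, rfl⟩)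
  · exact hY (zero_smul ℝ X)
  · exact h0.ne' (angle_eq_zero_iff.mpr ⟨hX, a, ha, rfl⟩)

theorem inner_smul_add_smul_of_norm_eq_one {X Y : V} (hX : ‖X‖ = 1) (hY : ‖Y‖ = 1)
    (α β γ δ : ℝ) :
    ⟪α • X + β • Y, γ • X + δ • Y⟫ = α * γ + β * δ + (α * δ + β * γ) * ⟪X, Y⟫ := by
  have hXX : ⟪X, X⟫ = 1 := by rw [real_inner_self_eq_norm_sq, hX]; norm_num
  have hYY : ⟪Y, Y⟫ = 1 := by rw [real_inner_self_eq_norm_sq, hY]; norm_num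
  simp only [inner_add_left, inner_add_right, real_inner_smul_left, real_inner_smul_right,
    hXX, hYY, real_inner_comm X Y]
  ring

theorem cos_angle_mul_le_abs_inner_of_mem_cone {X Y v w : V} (hX : ‖X‖ = 1) (hY : ‖Y‖ = 1)
    (hv : v ∈ cone X Y) (hw : w ∈ cone X Y) : cos (angle X Y) * (‖v‖ * ‖w‖) ≤ |⟪v, w⟫| := by
  obtain ⟨α, β, hαβ, rfl⟩ := hv
  obtain ⟨γ, δ, hγδ, rfl⟩ := hw
  have hcos : cos (angle X Y) = ⟪X, Y⟫ := by rw [cos_angle, hX, hY, mul_one, div_one]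
  have hc₁ : ⟪X, Y⟫ ≤ 1 := by simpa [hX, hY] using real_inner_le_norm X Y
  rw [hcos]
  rcases le_or_gt ⟪X, Y⟫ 0 with hc₀ | hc₀
  · exact (mul_nonpos_of_nonpos_of_nonneg hc₀ (by positivity)).trans (abs_nonneg _)
  · refine (le_abs_self _).trans (sq_le_sq.mp ?_)
    rw [mul_pow, mul_pow, ← real_inner_self_eq_norm_sq, ← real_inner_self_eq_norm_sq]
    simp only [inner_smul_add_smul_of_norm_eq_one hX hY]
    linear_combination sq_mul_le_sq_of_mul_nonneg hc₀.le hc₁ hαβ hγδ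

theorem mem_span_singleton_of_norm_mul_norm_le_abs_inner {v Z : V} (hZ : Z ≠ 0)
    (h : ‖v‖ * ‖Z‖ ≤ |⟪v, Z⟫|) : v ∈ ℝ ∙ Z := by
  rcases eq_or_ne v 0 with rfl | hv
  · exact zero_mem _
  have hCS : ‖⟪Z, v⟫‖ = ‖Z‖ * ‖v‖ := le_antisymm (norm_inner_le_norm Z v)
    (by rwa [real_inner_comm, Real.norm_eq_abs, mul_comm])
  obtain ⟨r, -, hr⟩ := (norm_inner_eq_norm_iff hZ hv).mp hCS
  exact Submodule.mem_span_singleton.mpr ⟨r, hr.symm⟩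

end Inner

/-- A nested sequence of cones `Cₙ = {αXₙ + βYₙ : αβ ≥ 0}` determined by unit vectors
whose angles tend to `0` intersects in a one-dimensional subspace of a 2-dimensional
real inner product space. -/
theorem nested_cones_intersection_is_line {V : Type*} [NormedAddCommGroup V]
    [InnerProductSpace ℝ V] [FiniteDimensional ℝ V] (hdim : Module.finrank ℝ V = 2)
    (X Y : ℕ → V) (hX : ∀ n, ‖X n‖ = 1) (hY : ∀ n, ‖Y n‖ = 1)
    (hangle_pos : ∀ n, 0 < angle (X n) (Y n))
    (hangle_lt : ∀ n, angle (X n) (Y n) < Real.pi)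
    (hnested : ∀ n, cone (X (n + 1)) (Y (n + 1)) ⊆ cone (X n) (Y n))
    (hangle : Tendsto (fun n => angle (X n) (Y n)) atTop (nhds 0)) :
    ∃ L : Submodule ℝ V, Module.finrank ℝ L = 1 ∧
      (⋂ n, cone (X n) (Y n)) = (L : Set V) := by
  have hclosed (n : ℕ) : IsClosed (cone (X n) (Y n)) :=
    isClosed_cone_of_linearIndependent hdim <| linearIndependent_pair_of_angle_pos_of_lt_pi
      (norm_ne_zero_iff.mp (by simp [hX n])) (norm_ne_zero_iff.mp (by simp [hY n]))
      (hangle_pos n) (hangle_lt n)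
  obtain ⟨Z, hZ⟩ := (isCompact_sphere (0 : V) 1).inter_left (hclosed 0)
    |>.nonempty_iInter_of_sequence_nonempty_isCompact_isClosed
      (fun n => cone (X n) (Y n) ∩ Metric.sphere 0 1)
      (fun n => Set.inter_subset_inter_left _ (hnested n))
      (fun n => ⟨X n, left_mem_cone _ _, by simp [hX n]⟩)
      (fun n => (hclosed n).inter Metric.isClosed_sphere)
  simp only [Set.mem_iInter, Set.mem_inter_iff, mem_sphere_zero_iff_norm] at hZ
  have hZ₀ : Z ≠ 0 := norm_ne_zero_iff.mp (by simp [(hZ 0).2])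
  refine ⟨ℝ ∙ Z, finrank_span_singleton hZ₀, Set.Subset.antisymm (fun v hv => ?_) ?_⟩
  · rw [Set.mem_iInter] at hv
    have hcos : Tendsto (fun n => cos (angle (X n) (Y n)) * (‖v‖ * ‖Z‖)) atTop
        (nhds (‖v‖ * ‖Z‖)) := by
      simpa using ((continuous_cos.tendsto 0).comp hangle).mul_const (‖v‖ * ‖Z‖)
    exact mem_span_singleton_of_norm_mul_norm_le_abs_inner hZ₀ <| le_of_tendsto hcos <|
      Eventually.of_forall fun n =>
        cos_angle_mul_le_abs_inner_of_mem_cone (hX n) (hY n) (hv n) (hZ n).1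
  · exact Set.subset_iInter fun n => span_singleton_subset_cone (hZ n).1
end

section
/- Suppose K : ℝ → ℝ is continuous, K ≤ 0 everywhere, and along every solution there is uniform recurrence of negative curvature: there exist τ > 0, δ > 0, ε > 0 such that for every t₀, the set {t ∈ [t₀, t₀+τ] : K(t) ≤ −δ} contains an interval of length ε. Then for the Jacobi solution with j(0) = 0, j'(0) = 1, the quantity j(t) grows at least exponentially: there exist C > 0, λ > 1 with j(t) ≥ Cλ^t for all t ≥ τ. -/
/-!
Because `K ≤ 0`, `(j j')' = j'² - K j² ≥ 0`, so `j j' ≥ 0` for `t ≥ 0`; there also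
`(j'²)' = -2K j j' ≥ 0`, so `j'² ≥ 1`, and since `j'(0) = 1` continuity forces `j' ≥ 1`.
Thus `j` is nondecreasing with `j(t) ≥ t`. On a window `[a, a + ε]` where `K ≤ -δ` this gives
`j'' = -K j ≥ δ j(a)`, so the second-order Taylor bound yields `j(a + ε) ≥ (1 + δε²/2) j(a)`.
Every interval of length `τ` contains such a window, hence `j(t + τ) ≥ (1 + δε²/2) j(t)`, and
iterating gives growth at rate `(1 + δε²/2)^(1/τ)`.
-/

open Set

lemma monotoneOn_of_hasDerivAt_nonneg {D : Set ℝ} (hD : Convex ℝ D) {f f' : ℝ → ℝ}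
    (hf : ∀ x, HasDerivAt f (f' x) x) (hf' : ∀ x ∈ interior D, 0 ≤ f' x) : MonotoneOn f D :=
  monotoneOn_of_hasDerivWithinAt_nonneg hD (fun x _ ↦ (hf x).continuousAt.continuousWithinAt)
    (fun x _ ↦ (hf x).hasDerivWithinAt) hf'

lemma add_mul_add_sq_le_of_le_deriv2 {f f' f'' : ℝ → ℝ} {a b c : ℝ} (hab : a ≤ b)
    (hf : ∀ x, HasDerivAt f (f' x) x) (hf' : ∀ x, HasDerivAt f' (f'' x) x)
    (hc : ∀ x ∈ Ioo a b, c ≤ f'' x) :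
    f a + f' a * (b - a) + c / 2 * (b - a) ^ 2 ≤ f b := by
  have ha : a ∈ Icc a b := left_mem_Icc.2 hab
  set g' : ℝ → ℝ := fun x ↦ f' x - f' a - c * (x - a)
  set g : ℝ → ℝ := fun x ↦ f x - f' a * (x - a) - c / 2 * (x - a) ^ 2
  have hg'_deriv (x : ℝ) : HasDerivAt g' (f'' x - c) x := by
    simpa using ((hf' x).sub_const (f' a)).fun_sub (((hasDerivAt_id' x).sub_const a).const_mul c)
  have hg_deriv (x : ℝ) : HasDerivAt g (g' x) x := by
    have := ((hf x).fun_sub (((hasDerivAt_id' x).sub_const a).const_mul (f' a))).fun_sub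
      ((((hasDerivAt_id' x).sub_const a).fun_pow 2).const_mul (c / 2))
    exact this.congr_deriv (by simp only [g']; ring)
  have hg'_nonneg : ∀ x ∈ Icc a b, 0 ≤ g' x := fun x hx ↦ by
    have := monotoneOn_of_hasDerivAt_nonneg (convex_Icc a b) hg'_deriv
      (fun y hy ↦ by rw [interior_Icc] at hy; linarith [hc y hy]) ha hx hx.1
    simpa [g'] using this
  have := monotoneOn_of_hasDerivAt_nonneg (convex_Icc a b) hg_deriv
    (fun y hy ↦ hg'_nonneg y (interior_subset hy)) ha (right_mem_Icc.2 hab) hab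
  simp only [g, sub_self] at this
  linarith

lemma exists_mul_rpow_le_of_mul_le_comp_add {g : ℝ → ℝ} {τ ρ m : ℝ} (hτ : 0 < τ) (hρ : 1 < ρ)
    (hm : 0 < m) (hbase : ∀ t ≥ τ, m ≤ g t) (hstep : ∀ t ≥ τ, ρ * g t ≤ g (t + τ)) :
    ∃ C > 0, ∃ l > 1, ∀ t ≥ τ, C * l ^ t ≤ g t := by
  have hρ0 : 0 < ρ := zero_lt_one.trans hρ
  have hiter (n : ℕ) : ∀ t ≥ τ, m * ρ ^ n ≤ g (t + n * τ) := by
    induction n with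
    | zero => simpa using hbase
    | succ n ih =>
      intro t ht
      have hshift : τ ≤ t + n * τ := by nlinarith [n.cast_nonneg (α := ℝ)]
      calc m * ρ ^ (n + 1) = ρ * (m * ρ ^ n) := by ring
        _ ≤ ρ * g (t + n * τ) := mul_le_mul_of_nonneg_left (ih t ht) hρ0.le
        _ ≤ g (t + n * τ + τ) := hstep _ hshift
        _ = g (t + ↑(n + 1) * τ) := by push_cast; ring_nf
  refine ⟨m / ρ ^ 2, by positivity, ρ ^ τ⁻¹, Real.one_lt_rpow hρ (inv_pos.2 hτ), fun t ht ↦ ?_⟩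
  -- write `t = s + n τ` with `s ∈ [τ, 2τ)`
  set n : ℕ := ⌊t / τ - 1⌋₊
  have hn_le : (n : ℝ) ≤ t / τ - 1 :=
    Nat.floor_le (by rw [le_sub_iff_add_le, le_div_iff₀ hτ]; linarith)
  have hn_gt : t / τ - 2 < n := by linarith [Nat.lt_floor_add_one (t / τ - 1)]
  have hs : τ ≤ t - n * τ := by
    have := mul_le_mul_of_nonneg_right hn_le hτ.le
    rw [sub_mul, div_mul_cancel₀ _ hτ.ne', one_mul] at this
    linarith
  calc m / ρ ^ 2 * (ρ ^ τ⁻¹) ^ t = m * ρ ^ (t / τ - 2) := by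
        rw [← Real.rpow_mul hρ0.le, Real.rpow_sub hρ0, Real.rpow_two, inv_mul_eq_div]; ring
    _ ≤ m * ρ ^ (n : ℝ) := by gcongr; exact hρ.le
    _ ≤ g (t - n * τ + n * τ) := by rw [Real.rpow_natCast]; exact hiter n _ hs
    _ = g t := by ring_nf

section Jacobi

variable {K j j' j'' : ℝ → ℝ}

lemma jacobi_mul_deriv_nonneg (hKneg : ∀ t, K t ≤ 0) (hj' : ∀ t, HasDerivAt j (j' t) t)
    (hj'' : ∀ t, HasDerivAt j' (j'' t) t) (heq : ∀ t, j'' t + K t * j t = 0) (h0 : j 0 = 0)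
    {t : ℝ} (ht : 0 ≤ t) : 0 ≤ j t * j' t := by
  have hmono : Monotone fun s ↦ j s * j' s :=
    monotone_of_hasDerivAt_nonneg (fun s ↦ (hj' s).mul (hj'' s)) fun s ↦ by
      have hjj'' : j s * j'' s = -K s * (j s * j s) := by linear_combination j s * heq s
      show 0 ≤ j' s * j' s + j s * j'' s
      nlinarith [mul_self_nonneg (j' s),
        mul_nonneg (neg_nonneg.2 (hKneg s)) (mul_self_nonneg (j s))]
  simpa [h0] using hmono ht

lemma one_le_jacobi_deriv (hKneg : ∀ t, K t ≤ 0) (hj' : ∀ t, HasDerivAt j (j' t) t)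
    (hj'' : ∀ t, HasDerivAt j' (j'' t) t) (heq : ∀ t, j'' t + K t * j t = 0) (h0 : j 0 = 0)
    (h1 : j' 0 = 1) {t : ℝ} (ht : 0 ≤ t) : 1 ≤ j' t := by
  have hsq : ∀ s ≥ 0, 1 ≤ j' s ^ 2 := fun s hs ↦ by
    have hmono : MonotoneOn (fun s ↦ j' s ^ 2) (Ici 0) :=
      monotoneOn_of_hasDerivAt_nonneg (convex_Ici 0) (fun s ↦ (hj'' s).pow 2) fun s hs ↦ by
        rw [interior_Ici] at hs
        have : j'' s = -K s * j s := by linarith [heq s]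
        simp only [this, Nat.cast_ofNat, Nat.add_one_sub_one, pow_one]
        nlinarith [mul_nonneg (neg_nonneg.2 (hKneg s))
          (jacobi_mul_deriv_nonneg hKneg hj' hj'' heq h0 hs.le)]
    simpa [h1] using hmono self_mem_Ici hs hs
  by_contra hlt
  have hneg : j' t < 0 := by nlinarith [hsq t ht]
  obtain ⟨s, hs, hzero⟩ : 0 ∈ j' '' Icc 0 t :=
    intermediate_value_Icc' ht (fun s _ ↦ (hj'' s).continuousAt.continuousWithinAt)
      ⟨hneg.le, h1 ▸ zero_le_one⟩
  have := hsq s hs.1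
  rw [hzero] at this
  norm_num at this

lemma jacobi_monotoneOn (hKneg : ∀ t, K t ≤ 0) (hj' : ∀ t, HasDerivAt j (j' t) t)
    (hj'' : ∀ t, HasDerivAt j' (j'' t) t) (heq : ∀ t, j'' t + K t * j t = 0) (h0 : j 0 = 0)
    (h1 : j' 0 = 1) : MonotoneOn j (Ici 0) :=
  monotoneOn_of_hasDerivAt_nonneg (convex_Ici 0) hj' fun t ht ↦ by
    rw [interior_Ici] at ht
    linarith [one_le_jacobi_deriv hKneg hj' hj'' heq h0 h1 ht.le]

lemma self_le_jacobi (hKneg : ∀ t, K t ≤ 0) (hj' : ∀ t, HasDerivAt j (j' t) t)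
    (hj'' : ∀ t, HasDerivAt j' (j'' t) t) (heq : ∀ t, j'' t + K t * j t = 0) (h0 : j 0 = 0)
    (h1 : j' 0 = 1) {t : ℝ} (ht : 0 ≤ t) : t ≤ j t := by
  have hmono : MonotoneOn (fun s ↦ j s - s) (Ici 0) :=
    monotoneOn_of_hasDerivAt_nonneg (convex_Ici 0) (fun s ↦ (hj' s).sub (hasDerivAt_id s))
      fun s hs ↦ by
        rw [interior_Ici] at hs
        linarith [one_le_jacobi_deriv hKneg hj' hj'' heq h0 h1 hs.le]
  simpa [h0] using hmono self_mem_Ici ht ht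

lemma jacobi_mul_le_of_le_neg_on_Icc (hKneg : ∀ t, K t ≤ 0) (hj' : ∀ t, HasDerivAt j (j' t) t)
    (hj'' : ∀ t, HasDerivAt j' (j'' t) t) (heq : ∀ t, j'' t + K t * j t = 0) (h0 : j 0 = 0)
    (h1 : j' 0 = 1) {a ε δ : ℝ} (ha : 0 ≤ a) (hε : 0 ≤ ε)
    (hKδ : ∀ t ∈ Icc a (a + ε), K t ≤ -δ) : (1 + δ * ε ^ 2 / 2) * j a ≤ j (a + ε) := by
  have hja : 0 ≤ j a := ha.trans (self_le_jacobi hKneg hj' hj'' heq h0 h1 ha)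
  have hj'a : 0 ≤ j' a := zero_le_one.trans (one_le_jacobi_deriv hKneg hj' hj'' heq h0 h1 ha)
  have hj''_ge : ∀ t ∈ Ioo a (a + ε), δ * j a ≤ j'' t := fun t ht ↦ by
    have hjt : j a ≤ j t :=
      jacobi_monotoneOn hKneg hj' hj'' heq h0 h1 ha (ha.trans ht.1.le) ht.1.le
    nlinarith [heq t, hKneg t, hKδ t (Ioo_subset_Icc_self ht)]
  have := add_mul_add_sq_le_of_le_deriv2 (le_add_of_nonneg_right hε) hj' hj'' hj''_ge
  rw [add_sub_cancel_left] at this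
  nlinarith [mul_nonneg hj'a hε]

end Jacobi

theorem recurrence_of_negative_curvature_exponential_growth_general
    (K j j' j'' : ℝ → ℝ) (τ δ ε : ℝ)
    (hKneg : ∀ t, K t ≤ 0)
    (hτ : 0 < τ) (hδ : 0 < δ) (hε : 0 < ε)
    (hrec : ∀ t₀ : ℝ, ∃ a : ℝ, t₀ ≤ a ∧ a + ε ≤ t₀ + τ ∧
      ∀ t ∈ Set.Icc a (a + ε), K t ≤ -δ)
    (hj' : ∀ t, HasDerivAt j (j' t) t)
    (hj'' : ∀ t, HasDerivAt j' (j'' t) t)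
    (heq : ∀ t, j'' t + K t * j t = 0)
    (h0 : j 0 = 0) (h1 : j' 0 = 1) :
    ∃ C > (0 : ℝ), ∃ l > (1 : ℝ), ∀ t ≥ τ, C * l ^ t ≤ j t := by
  have hρ : 1 < 1 + δ * ε ^ 2 / 2 := lt_add_of_pos_right 1 (by positivity)
  have hmono := jacobi_monotoneOn hKneg hj' hj'' heq h0 h1
  refine exists_mul_rpow_le_of_mul_le_comp_add hτ hρ hτ
    (fun t ht ↦ ht.trans (self_le_jacobi hKneg hj' hj'' heq h0 h1 (hτ.le.trans ht)))
    fun t₀ ht₀τ ↦ ?_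
  obtain ⟨a, ht₀a, haτ, hKδ⟩ := hrec t₀
  have ht₀ : 0 ≤ t₀ := hτ.le.trans ht₀τ
  have ha : 0 ≤ a := ht₀.trans ht₀a
  calc (1 + δ * ε ^ 2 / 2) * j t₀ ≤ (1 + δ * ε ^ 2 / 2) * j a :=
        mul_le_mul_of_nonneg_left (hmono ht₀ ha ht₀a) (by positivity)
    _ ≤ j (a + ε) := jacobi_mul_le_of_le_neg_on_Icc hKneg hj' hj'' heq h0 h1 ha hε.le hKδ
    _ ≤ j (t₀ + τ) := hmono (mem_Ici.2 (by linarith)) (mem_Ici.2 (by linarith)) haτ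

/-- If `K ≤ 0` is continuous and negative curvature recurs uniformly (on every window of
length `τ` there is a subinterval of length `ε` on which `K ≤ −δ`), then the Jacobi solution
with `j(0) = 0`, `j'(0) = 1` grows at least exponentially: there are `C > 0`, `λ > 1` with
`j(t) ≥ C·λ^t` for all `t ≥ τ`. -/
theorem recurrence_of_negative_curvature_exponential_growth
    (K j j' j'' : ℝ → ℝ) (τ δ ε : ℝ)
    (hK : Continuous K) (hKneg : ∀ t, K t ≤ 0)
    (hτ : 0 < τ) (hδ : 0 < δ) (hε : 0 < ε)
    (hrec : ∀ t₀ : ℝ, ∃ a : ℝ, t₀ ≤ a ∧ a + ε ≤ t₀ + τ ∧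
      ∀ t ∈ Set.Icc a (a + ε), K t ≤ -δ)
    (hj' : ∀ t, HasDerivAt j (j' t) t)
    (hj'' : ∀ t, HasDerivAt j' (j'' t) t)
    (heq : ∀ t, j'' t + K t * j t = 0)
    (h0 : j 0 = 0) (h1 : j' 0 = 1) :
    ∃ C > (0 : ℝ), ∃ l > (1 : ℝ), ∀ t ≥ τ, C * l ^ t ≤ j t :=
  recurrence_of_negative_curvature_exponential_growth_general K j j' j'' τ δ ε hKneg hτ hδ hε hrec
    hj' hj'' heq h0 h1
end
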